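/- Let T be a decision tree whose leaves partition the benchmark S into nonempty clusters C_1, ..., C_k, and suppose the total number of errors in S is positive. Then ALER(T) = BER if and only if every leaf has error rate equal to the base error rate, i.e., ER(C_l) = BER for all l ∈ {1, ..., k}. In particular, the evaluation score ALER(T) − BER is strictly positive exactly when some leaf's error rate differs from the base error rate. -/
import Mathlib


/-- Error rate of a cluster `C`: fraction of misclassified instances in `C`. -/
noncomputable def errRate {α : Type*} (E : α → ℕ) (C : Finset α) : ℝ :=
  (∑ x ∈ C, (E x : ℝ)) / C.card

/-- Error coverage of a cluster `C` within benchmark `S`: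
fraction of all errors of `S` that fall in `C`. -/
noncomputable def errCov {α : Type*} (E : α → ℕ) (S C : Finset α) : ℝ :=
  (∑ x ∈ C, (E x : ℝ)) / (∑ x ∈ S, (E x : ℝ))

/-- Average leaf error rate of a tree whose leaves are the clusters `C l`. -/
noncomputable def ALER {α : Type*} (E : α → ℕ) (S : Finset α) {k : ℕ}
    (C : Fin k → Finset α) : ℝ :=
  ∑ l, errRate E (C l) * errCov E S (C l)

/-- If the leaves of a decision tree partition the benchmark `S` into nonempty clusters
and the total number of errors in `S` is positive, then `ALER(T) = BER` iff every leaf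
has error rate equal to the base error rate `BER = ER(S)`; in particular, the evaluation
score `ALER(T) - BER` is strictly positive exactly when some leaf's error rate differs
from the base error rate. -/
theorem ALER_eq_BER_iff {α : Type*} [DecidableEq α]
    (S : Finset α) (hS : S.Nonempty)
    (E : α → ℕ) (hE : ∀ x, E x ≤ 1)
    (k : ℕ) (C : Fin k → Finset α)
    (hdisj : ∀ i j, i ≠ j → Disjoint (C i) (C j))
    (hcover : Finset.univ.biUnion (fun i => C i) = S)
    (hne : ∀ i, (C i).Nonempty)
    (herr : 0 < ∑ x ∈ S, E x) :
    (ALER E S C = errRate E S ↔ ∀ l, errRate E (C l) = errRate E S) ∧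
      (0 < ALER E S C - errRate E S ↔ ∃ l, errRate E (C l) ≠ errRate E S) := by
  classical
  set M : ℝ := ∑ x ∈ S, (E x : ℝ) with hM
  set N : ℝ := (S.card : ℝ) with hN
  set B : ℝ := errRate E S with hB
  set a : Fin k → ℝ := fun l => ∑ x ∈ C l, (E x : ℝ) with ha
  set n : Fin k → ℝ := fun l => ((C l).card : ℝ) with hn
  have hMpos : 0 < M := by
    rw [hM]
    have : (0:ℝ) < ((∑ x ∈ S, E x : ℕ) : ℝ) := by exact_mod_cast herr
    simpa using this
  have hNpos : 0 < N := by rw [hN]; exact_mod_cast hS.card_pos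
  have hnpos : ∀ l, 0 < n l := fun l => by simp only [hn]; exact_mod_cast (hne l).card_pos
  have hBN : B * N = M := by
    rw [hB, errRate, ← hM, ← hN]
    field_simp
  have hMsum : M = ∑ l, a l := by
    rw [hM, ← hcover, Finset.sum_biUnion]
    intro i _ j _ hij
    exact hdisj i j hij
  have hNsum : N = ∑ l, n l := by
    rw [hN, ← hcover, Finset.card_biUnion (fun i _ j _ hij => hdisj i j hij)]
    push_cast
    rfl
  have h1 : ∀ l, n l * (errRate E (C l) - B)^2
      = errRate E (C l) * a l - 2*B*(a l) + B^2 * n l := by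
    intro l
    have hne' : n l ≠ 0 := (hnpos l).ne'
    rw [errRate]
    simp only [ha, hn] at *
    field_simp
    ring
  have hsum : ∑ l, n l * (errRate E (C l) - B)^2
      = (∑ l, errRate E (C l) * a l) - 2*B*M + B^2 * N := by
    rw [Finset.sum_congr rfl (fun l _ => h1 l), Finset.sum_add_distrib,
      Finset.sum_sub_distrib, ← Finset.mul_sum, ← Finset.mul_sum, ← hMsum, ← hNsum]
  have hALER : ALER E S C = (∑ l, errRate E (C l) * a l) / M := by
    rw [ALER, Finset.sum_div]
    refine Finset.sum_congr rfl fun l _ => ?_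
    rw [errCov, ← hM]
    simp only [ha]
    rw [mul_div_assoc]
  have key : ALER E S C - B = (∑ l, n l * (errRate E (C l) - B)^2) / M := by
    rw [hsum, hALER]
    have : B^2 * N = B * M := by rw [pow_two, mul_assoc, hBN]
    rw [this]
    field_simp
    ring
  have hterm : ∀ l, 0 ≤ n l * (errRate E (C l) - B)^2 :=
    fun l => mul_nonneg (hnpos l).le (sq_nonneg _)
  have hiff : ALER E S C = B ↔ ∀ l, errRate E (C l) = B := by
    rw [← sub_eq_zero, key, div_eq_zero_iff, or_iff_left hMpos.ne',
      Finset.sum_eq_zero_iff_of_nonneg (fun l _ => hterm l)]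
    constructor
    · intro h l
      have := h l (Finset.mem_univ l)
      rcases mul_eq_zero.mp this with h' | h'
      · exact absurd h' (hnpos l).ne'
      · have := pow_eq_zero_iff (n := 2) (by norm_num) |>.mp h'
        linarith [sub_eq_zero.mp this]
    · intro h l _
      rw [h l]
      simp
  refine ⟨hiff, ?_⟩
  constructor
  · intro hpos
    by_contra hc
    push_neg at hc
    rw [sub_pos] at hpos
    exact absurd (hiff.mpr hc).symm hpos.ne
  · intro ⟨l, hl⟩
    have hge : 0 ≤ ALER E S C - B := by
      rw [key]
      exact div_nonneg (Finset.sum_nonneg fun l _ => hterm l) hMpos.le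
    rcases hge.lt_or_eq with h | h
    · exact h
    · exact absurd (hiff.mp (by linarith [h.symm, sub_eq_zero.mp h.symm]) l) hl
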